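/- If a nontrivial submodule B of M has degree 1 in the sum-essential graph S(M), then either B is a simple module, or there exists a simple submodule A properly contained in B such that A and B are the only nontrivial submodules of M. -/

import Mathlib

variable {R : Type*} [Ring R] {M : Type*} [AddCommGroup M] [Module R M]

/-- `N` is an essential submodule of `M`: it intersects every nonzero submodule nontrivially. -/
def IsEssentialSubmodule (N : Submodule R M) : Prop :=
  ∀ B : Submodule R M, B ≠ ⊥ → N ⊓ B ≠ ⊥

/-- A vertex of the sum-essential graph `S(M)`: a nontrivial submodule. -/
def IsVertexS (N : Submodule R M) : Prop := N ≠ ⊥ ∧ N ≠ ⊤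

/-- Adjacency in the sum-essential graph `S(M)`. -/
def AdjS (A B : Submodule R M) : Prop :=
  IsVertexS A ∧ IsVertexS B ∧ A ≠ B ∧ IsEssentialSubmodule (A ⊔ B)

/-- A vertex of the proper sum-essential graph `N(M)`: a nontrivial non-essential submodule. -/
def IsVertexP (N : Submodule R M) : Prop :=
  N ≠ ⊥ ∧ N ≠ ⊤ ∧ ¬ IsEssentialSubmodule N

/-- Adjacency in the proper sum-essential graph `N(M)`. -/
def AdjP (A B : Submodule R M) : Prop :=
  IsVertexP A ∧ IsVertexP B ∧ A ≠ B ∧ IsEssentialSubmodule (A ⊔ B)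

/-- `U` is a uniform submodule: nonzero, and any two nonzero submodules of it intersect. -/
def UniformSubmodule (U : Submodule R M) : Prop :=
  U ≠ ⊥ ∧ ∀ A B : Submodule R M, A ≤ U → B ≤ U → A ≠ ⊥ → B ≠ ⊥ → A ⊓ B ≠ ⊥

/-- `C` is a complement of `U` in `M`: maximal with respect to `U ⊓ C = ⊥`. -/
def IsComplementOf (C U : Submodule R M) : Prop :=
  U ⊓ C = ⊥ ∧ ∀ D : Submodule R M, U ⊓ D = ⊥ → C ≤ D → D = C

/-! If `B` is essential, every other vertex is adjacent to `B`, so `S(M)` has at most two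
vertices; a non-simple `B` then contains exactly one nontrivial submodule, which must be simple.
If `B` is not essential, choose `X` maximal with `B ∩ X = 0`; then `B + X` is essential, so `X`
is the unique neighbour of `B`. A submodule `0 < A < B` would give a second neighbour `A + X`,
unless `A + X = M`, in which case the modular law gives `B = A + (B ∩ X) = A`. -/

theorem exists_le_maximal_disjoint {α : Type*} [CompleteLattice α] [IsCompactlyGenerated α]
    {a y : α} (h : Disjoint a y) : ∃ x, y ≤ x ∧ Maximal (Disjoint a) x :=
  zorn_le_nonempty₀ {x | Disjoint a x}
    (fun _ hc hchain _ _ => ⟨_, hchain.directedOn.disjoint_sSup_right.mpr hc, fun _ => le_sSup⟩)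
    y h

theorem IsEssentialSubmodule.mono {N N' : Submodule R M} (hN : IsEssentialSubmodule N)
    (h : N ≤ N') : IsEssentialSubmodule N' :=
  fun X hX hN'X => hN X hX (le_bot_iff.mp (hN'X ▸ inf_le_inf_right X h))

theorem Maximal.isEssentialSubmodule_sup {B X : Submodule R M} (hX : Maximal (Disjoint B) X) :
    IsEssentialSubmodule (B ⊔ X) := by
  intro Z hZ hBXZ
  have hdisj : Disjoint (B ⊔ X) Z := disjoint_iff.mpr hBXZ
  have hZX : Z ≤ X :=
    le_sup_right.trans (hX.le_of_ge (hX.prop.disjoint_sup_right_of_disjoint_sup_left hdisj)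
      le_sup_left)
  exact hZ (hdisj.eq_bot_of_ge (hZX.trans le_sup_right))

theorem exists_disjoint_isEssentialSubmodule_sup {B : Submodule R M}
    (hB : ¬ IsEssentialSubmodule B) :
    ∃ X, X ≠ ⊥ ∧ Disjoint B X ∧ IsEssentialSubmodule (B ⊔ X) := by
  unfold IsEssentialSubmodule at hB
  push Not at hB
  obtain ⟨Y, hY, hBY⟩ := hB
  obtain ⟨X, hYX, hX⟩ := exists_le_maximal_disjoint (disjoint_iff.mpr hBY)
  exact ⟨X, ne_bot_of_le_ne_bot hY hYX, hX.prop, hX.isEssentialSubmodule_sup⟩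

theorem adjS_of_isEssentialSubmodule {B N : Submodule R M} (hB : IsVertexS B)
    (hBess : IsEssentialSubmodule B) (hN : IsVertexS N) (hNB : N ≠ B) : AdjS B N :=
  ⟨hB, hN, hNB.symm, hBess.mono le_sup_left⟩

theorem isAtom_or_exists_isAtom_of_isVertexS_eq_or_eq {B C : Submodule R M} (hB : B ≠ ⊥)
    (h : ∀ N, IsVertexS N → N = B ∨ N = C) :
    IsAtom B ∨ ∃ A : Submodule R M, IsAtom A ∧ A < B ∧
      ∀ N : Submodule R M, IsVertexS N → N = A ∨ N = B := by
  have eq_C : ∀ N, N ≠ ⊥ → N < B → N = C := fun N hN hNB =>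
    (h N ⟨hN, (hNB.trans_le le_top).ne⟩).resolve_left hNB.ne
  by_cases hBa : ∀ A < B, A = ⊥
  · exact Or.inl ⟨hB, hBa⟩
  push Not at hBa
  obtain ⟨A, hAB, hA⟩ := hBa
  have hAC : A = C := eq_C A hA hAB
  refine Or.inr ⟨A, ⟨hA, fun X hXA => ?_⟩, hAB, fun N hN => ?_⟩
  · by_contra hX
    exact hXA.ne ((eq_C X hX (hXA.trans hAB)).trans hAC.symm)
  · exact (h N hN).symm.imp_left (·.trans hAC.symm)

theorem isAtom_of_not_isEssentialSubmodule {B : Submodule R M} (hB : IsVertexS B)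
    (hBess : ¬ IsEssentialSubmodule B) (huniq : ∀ C C', AdjS B C → AdjS B C' → C = C') :
    IsAtom B := by
  obtain ⟨X, hX, hBX, hBXess⟩ := exists_disjoint_isEssentialSubmodule_sup hBess
  have hX_not_le : ¬ X ≤ B := fun hXB => hX (hBX.eq_bot_of_ge hXB)
  have hadjX : AdjS B X :=
    ⟨hB, ⟨hX, fun hXtop => hB.1 (hBX.eq_bot_of_le (hXtop ▸ le_top))⟩,
      fun hBX' => hX_not_le hBX'.ge, hBXess⟩
  refine ⟨hB.1, fun A hAB => ?_⟩
  by_contra hA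
  by_cases hAX : A ⊔ X = ⊤
  · refine hAB.ne (Eq.symm ?_)
    rw [← top_inf_eq B, ← hAX, sup_inf_assoc_of_le X hAB.le, inf_comm, hBX.eq_bot, sup_bot_eq]
  · have hadjAX : AdjS B (A ⊔ X) :=
      ⟨hB, ⟨ne_bot_of_le_ne_bot hX le_sup_right, hAX⟩,
        fun h => hX_not_le (le_sup_right.trans h.ge),
        by rwa [← sup_assoc, sup_eq_left.mpr hAB.le]⟩
    have hAX_le : A ≤ X := le_sup_left.trans (huniq _ _ hadjAX hadjX).le
    exact hA ((hBX.mono_left hAB.le).eq_bot_of_le hAX_le)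

/-- If a nontrivial submodule `B` has degree 1 in `S(M)`, then either
`B` is simple, or there is a simple submodule `A ⊂ B` such that `A` and `B` are
the only nontrivial submodules of `M`. -/
theorem stmt7 (B : Submodule R M) (hB : IsVertexS B) (hdeg : ∃! C, AdjS B C) :
    IsAtom B ∨ ∃ A : Submodule R M, IsAtom A ∧ A < B ∧
      ∀ N : Submodule R M, IsVertexS N → N = A ∨ N = B := by
  obtain ⟨C, -, huniq⟩ := hdeg
  by_cases hBess : IsEssentialSubmodule B
  · exact isAtom_or_exists_isAtom_of_isVertexS_eq_or_eq hB.1 fun N hN =>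
      or_iff_not_imp_left.mpr fun hNB => huniq N (adjS_of_isEssentialSubmodule hB hBess hN hNB)
  · exact Or.inl <| isAtom_of_not_isEssentialSubmodule hB hBess fun D D' hD hD' =>
      (huniq D hD).trans (huniq D' hD').symm
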